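/- arXiv:2410.19105 — 3 statements merged into one kernel-verified Lean document; each statement's English description precedes it below -/
import Mathlib

section
/- Simulation-based calibration uniformity (continuous limit): if θ* ~ p(θ), X ~ p(X|θ*), and θ̃ ~ p(θ|X) is drawn from the exact posterior, and if the conditional CDF F_X(u) = P(θ̃_j ≤ u | X) is continuous for every X, then the random variable U = F_X(θ*_j) is uniformly distributed on [0,1], for each coordinate j. -/
/-!
Disintegrate the joint law of `(X, θ*_j)` along `X`: conditionally on `X = x`, `θ*_j` has law
`κ x`, so it suffices to prove the probability integral transform for a single probability
measure `μ` on `ℝ` with continuous CDF `F`. There the sublevel set `{F ≤ t}` is a closed lower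
set, hence `∅` (only when `t = 0`), `ℝ` (only when `t = 1`) or some `Iic s`, and in the last
case continuity forces `F s = t`, so `μ {F ≤ t} = F s = t`.
-/

open MeasureTheory ProbabilityTheory Set Filter Topology

lemma Monotone.exists_setOf_le_eq_Iic {F : ℝ → ℝ} (hmono : Monotone F) (hcont : Continuous F)
    {t : ℝ} (hne : {u | F u ≤ t}.Nonempty) (hbdd : BddAbove {u | F u ≤ t}) :
    ∃ s, F s = t ∧ {u | F u ≤ t} = Iic s := by
  set A := {u | F u ≤ t}
  have hsA : sSup A ∈ A := (isClosed_le hcont continuous_const).csSup_mem hne hbdd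
  have hA : A = Iic (sSup A) :=
    Subset.antisymm (fun u hu => le_csSup hbdd hu) fun u hu => (hmono hu).trans hsA
  refine ⟨sSup A, le_antisymm hsA ?_, hA⟩
  have hright : ∀ᶠ u in 𝓝[>] sSup A, t ≤ F u := by
    filter_upwards [self_mem_nhdsWithin] with u hu
    exact (not_le.1 fun h => hu.not_ge (mem_Iic.1 (hA.subset h))).le
  exact _root_.ge_of_tendsto (hcont.continuousWithinAt (s := Ioi (sSup A))) hright

lemma measure_setOf_cdf_le_of_continuous {μ : Measure ℝ} [IsProbabilityMeasure μ]
    (hcont : Continuous (cdf μ)) {t : ℝ} (ht : t ∈ Icc (0 : ℝ) 1) :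
    μ {u | cdf μ u ≤ t} = ENNReal.ofReal t := by
  rcases eq_empty_or_nonempty {u | cdf μ u ≤ t} with hempty | hne
  · have ht0 : t ≤ 0 :=
      ge_of_tendsto (tendsto_cdf_atBot μ)
        (Eventually.of_forall fun u => not_lt.1 fun h => hempty.subset h.le)
    rw [hempty, le_antisymm ht0 ht.1]
    simp
  by_cases hbdd : BddAbove {u | cdf μ u ≤ t}
  · obtain ⟨s, hs, hA⟩ := (monotone_cdf μ).exists_setOf_le_eq_Iic hcont hne hbdd
    rw [hA, ← ofReal_cdf, hs]
  · have huniv : ∀ u, cdf μ u ≤ t := fun u => by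
      obtain ⟨a, haA, hua⟩ := not_bddAbove_iff.1 hbdd u
      exact (monotone_cdf μ hua.le).trans haA
    have ht1 : 1 ≤ t := le_of_tendsto (tendsto_cdf_atTop μ) (Eventually.of_forall huniv)
    rw [show {u | cdf μ u ≤ t} = univ from eq_univ_of_forall huniv, le_antisymm ht.2 ht1]
    simp

lemma ProbabilityTheory.Kernel.measurable_measure_Iic {α : Type*} [MeasurableSpace α]
    (κ : Kernel α ℝ) [IsSFiniteKernel κ] :
    Measurable fun p : α × ℝ => κ p.1 (Iic p.2) := by
  simpa [Kernel.comap_apply, Iic] using Kernel.measurable_kernel_prodMk_left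
    (κ := κ.comap Prod.fst measurable_fst) (t := {p : (α × ℝ) × ℝ | p.2 ≤ p.1.2})
    (measurableSet_le measurable_snd measurable_fst.snd)

lemma measure_preimage_eq_of_map_eq_compProd {Ω α β : Type*} [MeasurableSpace Ω]
    [MeasurableSpace α] [MeasurableSpace β] {P : Measure Ω} [IsProbabilityMeasure P]
    {X : Ω → α} {Y : Ω → β} (hX : Measurable X) (hY : Measurable Y)
    {κ : Kernel α β} [IsSFiniteKernel κ]
    (hjoint : P.map (fun ω => (X ω, Y ω)) = P.map X ⊗ₘ κ)
    {S : Set (α × β)} (hS : MeasurableSet S) {c : ENNReal}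
    (hslice : ∀ x, κ x (Prod.mk x ⁻¹' S) = c) :
    P ((fun ω => (X ω, Y ω)) ⁻¹' S) = c := by
  have : IsProbabilityMeasure (P.map X) := Measure.isProbabilityMeasure_map hX.aemeasurable
  rw [← Measure.map_apply (hX.prodMk hY) hS, hjoint, Measure.compProd_apply hS]
  simp [hslice]

/-- SBC uniformity, continuous limit: if `κ` is the conditional
distribution of the (exact posterior) draw `θ̃_j` given `X`, so that the joint law
of `(X, θ*_j)` is `law(X) ⊗ₘ κ`, and the conditional CDF `u ↦ κ(X)(-∞, u]` is
continuous for every `X`, then `U = F_X(θ*_j)` is uniform on `[0,1]`. -/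
theorem stmt_5 {Ω 𝒳 : Type*} [MeasurableSpace Ω] [MeasurableSpace 𝒳]
    (P : Measure Ω) [IsProbabilityMeasure P]
    (X : Ω → 𝒳) (θj : Ω → ℝ) (hX : Measurable X) (hθj : Measurable θj)
    (κ : Kernel 𝒳 ℝ) [IsMarkovKernel κ]
    (hjoint : Measure.map (fun ω => (X ω, θj ω)) P = (Measure.map X P) ⊗ₘ κ)
    (hcont : ∀ x, Continuous (fun u => (κ x (Set.Iic u)).toReal)) :
    ∀ t ∈ Set.Icc (0 : ℝ) 1,
      P {ω | (κ (X ω) (Set.Iic (θj ω))).toReal ≤ t} = ENNReal.ofReal t := by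
  intro t ht
  have hcdf : ∀ x, (fun u => (κ x (Iic u)).toReal) = cdf (κ x) := fun x =>
    funext fun u => (cdf_eq_real (κ x) u).symm
  have hS : MeasurableSet {p : 𝒳 × ℝ | (κ p.1 (Iic p.2)).toReal ≤ t} :=
    measurableSet_le κ.measurable_measure_Iic.ennreal_toReal measurable_const
  refine measure_preimage_eq_of_map_eq_compProd hX hθj hjoint hS fun x => ?_
  have hslice := measure_setOf_cdf_le_of_continuous (hcdf x ▸ hcont x) ht
  rwa [← hcdf x] at hslice
end

section
/- Normal–inverse-gamma conjugacy for the variance: if σ² ~ InverseGamma(d/2, η/2), μ | σ² ~ N(0, σ²/κ), and given (μ, σ²) the observations X_1,…,X_n are iid N(μ, σ²), then the posterior of (μ, σ²) given the data is again a normal–inverse-gamma distribution with updated parameters κ' = κ + n, μ' = (n X̄)/(κ + n), d' = d + n, and η' = η + Σ_i (X_i − X̄)² + κ n X̄²/(κ + n), where X̄ is the sample mean. -/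
open scoped BigOperators

/-- Inverse-gamma density with shape `a` and scale `b`. -/
noncomputable def invGammaDensity (a b s2 : ℝ) : ℝ :=
  b ^ a / Real.Gamma a * s2 ^ (-(a + 1)) * Real.exp (-b / s2)

/-- Normal density with mean `m` and variance `v`. -/
noncomputable def normalDensity (m v x : ℝ) : ℝ :=
  (2 * Real.pi * v) ^ (-(1 : ℝ) / 2) * Real.exp (-(x - m) ^ 2 / (2 * v))

/-- Normal–inverse-gamma density `NIG(μ₀, κ, d, η)`:
`σ² ~ InverseGamma(d/2, η/2)` and `μ | σ² ~ N(μ₀, σ²/κ)`. -/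
noncomputable def nigDensity (μ0 κ d η μ s2 : ℝ) : ℝ :=
  invGammaDensity (d / 2) (η / 2) s2 * normalDensity μ0 (s2 / κ) μ

/-!
Both the prior density and the likelihood are, as functions of `(μ, σ²)`, a constant times a power
of `σ²` times `exp (-Q(μ) / (2σ²))` with `Q` quadratic in `μ`. Multiplying them adds the
exponents of `σ²` (`d` becomes `d + n`) and adds the quadratics:
`η + κ (μ - μ₀)² + Σ (Xᵢ - μ)²`. Splitting off the sample mean and completing the square turns
this into `η' + (κ + n) (μ - μ')²`, which is again of the NIG shape.
-/

open Finset Real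

noncomputable def nigNormConst (κ d η : ℝ) : ℝ :=
  (η / 2) ^ (d / 2) / Gamma (d / 2) * (κ / (2 * π)) ^ (1 / 2 : ℝ)

lemma nigNormConst_pos {κ d η : ℝ} (hκ : 0 < κ) (hd : 0 < d) (hη : 0 < η) :
    0 < nigNormConst κ d η := by
  have := Gamma_pos_of_pos (half_pos hd)
  unfold nigNormConst
  positivity

lemma nigDensity_eq (μ0 d η μ : ℝ) {κ s2 : ℝ} (hκ : 0 < κ) (hs2 : 0 < s2) :
    nigDensity μ0 κ d η μ s2 =
      nigNormConst κ d η * s2 ^ (-(d + 3) / 2) * exp (-(η + κ * (μ - μ0) ^ 2) / (2 * s2)) := by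
  have hvar : (2 * π * (s2 / κ)) ^ (-(1 : ℝ) / 2)
      = (κ / (2 * π)) ^ (1 / 2 : ℝ) * s2 ^ (-(1 : ℝ) / 2) := by
    rw [show 2 * π * (s2 / κ) = s2 / (κ / (2 * π)) by field_simp,
      div_rpow hs2.le (by positivity), show (-(1 : ℝ) / 2) = -(1 / 2) by ring,
      rpow_neg hs2.le, rpow_neg (by positivity : (0 : ℝ) ≤ κ / (2 * π))]
    field_simp
  have hpow : s2 ^ (-(d + 3) / 2) = s2 ^ (-(d / 2 + 1)) * s2 ^ (-(1 : ℝ) / 2) := by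
    rw [← rpow_add hs2]; ring_nf
  have hexp : exp (-(η + κ * (μ - μ0) ^ 2) / (2 * s2))
      = exp (-(η / 2) / s2) * exp (-(μ - μ0) ^ 2 / (2 * (s2 / κ))) := by
    rw [← exp_add]; congr 1; field_simp; ring
  unfold nigDensity invGammaDensity normalDensity nigNormConst
  rw [hvar, hpow, hexp]
  ring

lemma prod_normalDensity_eq {ι : Type*} [Fintype ι] (X : ι → ℝ) (μ : ℝ) {s2 : ℝ} (hs2 : 0 < s2) :
    ∏ i, normalDensity μ s2 (X i) =
      (2 * π) ^ (-(Fintype.card ι : ℝ) / 2) * s2 ^ (-(Fintype.card ι : ℝ) / 2)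
        * exp (-(∑ i, (X i - μ) ^ 2) / (2 * s2)) := by
  have hconst : ((2 * π * s2) ^ (-(1 : ℝ) / 2)) ^ Fintype.card ι
      = (2 * π) ^ (-(Fintype.card ι : ℝ) / 2) * s2 ^ (-(Fintype.card ι : ℝ) / 2) := by
    rw [← rpow_natCast, ← rpow_mul (by positivity), mul_rpow (by positivity) hs2.le]
    ring_nf
  unfold normalDensity
  rw [prod_mul_distrib, prod_const, card_univ, hconst, ← exp_sum, ← sum_div, sum_neg_distrib]

lemma sum_sub_mean_eq_zero {ι : Type*} (s : Finset ι) (f : ι → ℝ) :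
    ∑ i ∈ s, (f i - (∑ j ∈ s, f j) / #s) = 0 := by
  rw [sum_sub_distrib, sum_const, nsmul_eq_mul]
  rcases s.eq_empty_or_nonempty with rfl | hs
  · simp
  · field_simp [hs.card_pos.ne']
    ring

lemma sum_sub_sq_eq_sum_sub_mean_sq_add {ι : Type*} (s : Finset ι) (f : ι → ℝ) (a : ℝ) :
    ∑ i ∈ s, (f i - a) ^ 2 =
      ∑ i ∈ s, (f i - (∑ j ∈ s, f j) / #s) ^ 2 + #s * ((∑ j ∈ s, f j) / #s - a) ^ 2 := by
  set m := (∑ j ∈ s, f j) / #s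
  have hsplit : ∀ i ∈ s, (f i - a) ^ 2 = (f i - m) ^ 2 + 2 * (m - a) * (f i - m) + (m - a) ^ 2 :=
    fun i _ => by ring
  rw [sum_congr rfl hsplit, sum_add_distrib, sum_add_distrib, ← mul_sum, sum_sub_mean_eq_zero,
    sum_const, nsmul_eq_mul]
  ring

lemma mul_sq_add_mul_sq_eq_add_mul_sq {κ n : ℝ} (h : κ + n ≠ 0) (μ0 m μ : ℝ) :
    κ * (μ - μ0) ^ 2 + n * (m - μ) ^ 2 =
      κ * n * (m - μ0) ^ 2 / (κ + n) + (κ + n) * (μ - (κ * μ0 + n * m) / (κ + n)) ^ 2 := by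
  field_simp
  ring

theorem nigDensity_mul_prod_normalDensity {ι : Type*} [Fintype ι] (μ0 : ℝ) {κ d η : ℝ}
    (hκ : 0 < κ) (hd : 0 < d) (hη : 0 < η) (X : ι → ℝ) :
    ∃ c > 0, ∀ μ s2 : ℝ, 0 < s2 →
      nigDensity μ0 κ d η μ s2 * ∏ i, normalDensity μ s2 (X i) =
        c * nigDensity
          ((κ * μ0 + Fintype.card ι * ((∑ i, X i) / Fintype.card ι)) / (κ + Fintype.card ι))
          (κ + Fintype.card ι) (d + Fintype.card ι)
          (η + ∑ i, (X i - (∑ j, X j) / Fintype.card ι) ^ 2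
            + κ * Fintype.card ι * ((∑ i, X i) / Fintype.card ι - μ0) ^ 2 / (κ + Fintype.card ι))
          μ s2 := by
  set n : ℝ := (Fintype.card ι : ℝ) with hn
  set m := (∑ i, X i) / n
  set η' := η + ∑ i, (X i - m) ^ 2 + κ * n * (m - μ0) ^ 2 / (κ + n)
  have hκn : 0 < κ + n := by positivity
  have hη' : 0 < η' := by positivity
  have hC := nigNormConst_pos hκ hd hη
  have hC' := nigNormConst_pos hκn (by positivity : 0 < d + n) hη'
  refine ⟨nigNormConst κ d η * (2 * π) ^ (-n / 2) / nigNormConst (κ + n) (d + n) η',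
    by positivity, fun μ s2 hs2 => ?_⟩
  have hquad : η + κ * (μ - μ0) ^ 2 + ∑ i, (X i - μ) ^ 2
      = η' + (κ + n) * (μ - (κ * μ0 + n * m) / (κ + n)) ^ 2 := by
    rw [sum_sub_sq_eq_sum_sub_mean_sq_add univ X μ, card_univ]
    have := mul_sq_add_mul_sq_eq_add_mul_sq hκn.ne' μ0 m μ
    linarith
  have hpow : s2 ^ (-(d + n + 3) / 2) = s2 ^ (-(d + 3) / 2) * s2 ^ (-n / 2) := by
    rw [← rpow_add hs2]; ring_nf
  have hexp : exp (-(η' + (κ + n) * (μ - (κ * μ0 + n * m) / (κ + n)) ^ 2) / (2 * s2))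
      = exp (-(η + κ * (μ - μ0) ^ 2) / (2 * s2)) * exp (-(∑ i, (X i - μ) ^ 2) / (2 * s2)) := by
    rw [← exp_add, ← hquad]; ring_nf
  rw [nigDensity_eq _ _ _ _ hκ hs2, nigDensity_eq _ _ _ _ hκn hs2, prod_normalDensity_eq _ _ hs2,
    ← hn, hpow, hexp]
  field_simp

/-- normal–inverse-gamma conjugacy: with prior `NIG(0, κ, d, η)`
and iid `N(μ, σ²)` observations `X_1,…,X_n`, the posterior (Bayes: prior ×
likelihood, up to a constant) is `NIG(μ', κ', d', η')` with
`κ' = κ + n`, `μ' = n X̄ / (κ + n)`, `d' = d + n`,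
`η' = η + Σ (X_i - X̄)² + κ n X̄² / (κ + n)`. -/
theorem stmt_8 (κ d η : ℝ) (hκ : 0 < κ) (hd : 0 < d) (hη : 0 < η)
    (n : ℕ) (X : Fin n → ℝ) :
    ∃ c > 0, ∀ μ s2 : ℝ, 0 < s2 →
      nigDensity 0 κ d η μ s2 * ∏ i, normalDensity μ s2 (X i)
        = c * nigDensity
            ((n * ((∑ i, X i) / n)) / (κ + n))
            (κ + n) (d + n)
            (η + ∑ i, (X i - (∑ j, X j) / n) ^ 2
               + κ * n * ((∑ i, X i) / n) ^ 2 / (κ + n))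
            μ s2 := by
  simpa only [Fintype.card_fin, mul_zero, zero_add, sub_zero] using
    nigDensity_mul_prod_normalDensity 0 hκ hd hη X
end

section
/- Monotonicity of the g-and-k quantile transform in z for k ≥ 0 and small skewness: the function Q(z) = a + b(1 + c·tanh(gz/2))(1+z²)^k z is strictly increasing in z ∈ ℝ whenever b > 0, k ≥ 0, and |c| < 1 with |c·g| small enough that 1 + c·tanh(gz/2) + (c g z / 2)·sech²(gz/2) > 0 for all z; in particular Q is strictly increasing when g = 0, b > 0, k ≥ 0. -/
/-!
Write `Q(z) = a + b · u(z) · (1 + z²)^k · z` with `u(z) = 1 + c·tanh(gz/2)`. By the product rule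
`Q'(z) / b = (1 + z²)^k · (u(z)·z)' + 2k · u(z) · z² · (1 + z²)^(k-1)`. The first term is positive by
the hypothesis on `(u(z)·z)' = 1 + c·tanh(gz/2) + (cgz/2)·sech²(gz/2)`, and the second is nonnegative
because `k ≥ 0` and `u > 0`, which holds as `|c| < 1` and `|tanh| < 1`.
-/

open Real

theorem Real.hasDerivAt_tanh (x : ℝ) : HasDerivAt tanh ((1 / cosh x) ^ 2) x := by
  have hquot := (hasDerivAt_sinh x).div (hasDerivAt_cosh x) (cosh_pos x).ne'
  have hsech : (cosh x * cosh x - sinh x * sinh x) / cosh x ^ 2 = (1 / cosh x) ^ 2 := by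
    rw [← sq, ← sq, cosh_sq_sub_sinh_sq, one_div_pow]
  rw [hsech] at hquot
  rwa [show tanh = fun y => sinh y / cosh y from funext tanh_eq_sinh_div_cosh]

theorem hasDerivAt_one_add_sq_rpow (k z : ℝ) :
    HasDerivAt (fun z : ℝ => (1 + z ^ 2) ^ k) (2 * z * k * (1 + z ^ 2) ^ (k - 1)) z := by
  have hbase : HasDerivAt (fun z : ℝ => 1 + z ^ 2) (2 * z) z := by
    simpa using (hasDerivAt_pow 2 z).const_add 1
  exact hbase.rpow_const (Or.inl (by positivity))

theorem strictMono_mul_one_add_sq_rpow_mul {u u' : ℝ → ℝ} {k : ℝ} (hk : 0 ≤ k)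
    (hu : ∀ z, HasDerivAt u (u' z) z) (hu_pos : ∀ z, 0 < u z)
    (hmul_deriv_pos : ∀ z, 0 < u' z * z + u z) :
    StrictMono fun z => u z * (1 + z ^ 2) ^ k * z := by
  apply strictMono_of_deriv_pos
  intro z
  have hderiv : HasDerivAt (fun z => u z * (1 + z ^ 2) ^ k * z)
      ((1 + z ^ 2) ^ k * (u' z * z + u z) + 2 * k * u z * z ^ 2 * (1 + z ^ 2) ^ (k - 1)) z := by
    refine (((hu z).fun_mul (hasDerivAt_one_add_sq_rpow k z)).fun_mul
      (hasDerivAt_id' z)).congr_deriv ?_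
    ring
  rw [hderiv.deriv]
  have hu_z := hu_pos z
  have hmul_z := hmul_deriv_pos z
  positivity

theorem hasDerivAt_one_add_mul_tanh (c g z : ℝ) :
    HasDerivAt (fun y => 1 + c * tanh (g * y / 2))
      (c * ((1 / cosh (g * z / 2)) ^ 2 * (g / 2))) z := by
  have hlin : HasDerivAt (fun y : ℝ => g * y / 2) (g / 2) z := by
    simpa using ((hasDerivAt_id z).const_mul g).div_const 2
  exact (((hasDerivAt_tanh _).comp z hlin).const_mul c).const_add 1

theorem one_add_mul_tanh_pos {c : ℝ} (hc : |c| < 1) (x : ℝ) : 0 < 1 + c * tanh x := by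
  have hlt : |c * tanh x| < 1 := by
    rw [abs_mul]
    calc |c| * |tanh x| ≤ |c| := mul_le_of_le_one_right (abs_nonneg c) (abs_tanh_lt_one x).le
      _ < 1 := hc
  linarith [neg_lt_of_abs_lt hlt]

/-- monotonicity of the g-and-k quantile transform: the function
`Q(z) = a + b (1 + c·tanh(gz/2)) (1+z²)^k z` is strictly increasing on `ℝ`
whenever `b > 0`, `k ≥ 0`, `|c| < 1`, and
`1 + c·tanh(gz/2) + (cgz/2)·sech²(gz/2) > 0` for all `z`
(in particular when `g = 0`). -/
theorem stmt_15 (a b g k c : ℝ) (hb : 0 < b) (hk : 0 ≤ k) (hc : |c| < 1)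
    (hpos : ∀ z : ℝ,
      0 < 1 + c * Real.tanh (g * z / 2)
          + (c * g * z / 2) * (1 / Real.cosh (g * z / 2)) ^ 2) :
    StrictMono (fun z : ℝ =>
      a + b * (1 + c * Real.tanh (g * z / 2)) * (1 + z ^ 2) ^ k * z) := by
  have hmono : StrictMono fun z => (1 + c * tanh (g * z / 2)) * (1 + z ^ 2) ^ k * z := by
    refine strictMono_mul_one_add_sq_rpow_mul hk (hasDerivAt_one_add_mul_tanh c g)
      (fun z => one_add_mul_tanh_pos hc _) fun z => ?_
    convert hpos z using 1
    ring
  simpa only [mul_assoc] using (hmono.const_mul hb).const_add a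
end
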